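/- arXiv:2206.02006 — 2 statements merged into one kernel-verified Lean document; each statement's English description precedes it below -/
import Mathlib

section
/- Let d be a positive integer, α < β real numbers, x ∈ ℝ^d with x_i ≥ 0 for every i, y ∈ {−1, +1}, a ∈ ℝ with y·a ≤ 0, and C ∈ ℝ. Then the per-sample two-layer network loss, viewed as the set function L : 𝒫({1,…,d}) → ℝ defined by L(S) = log(1 + exp(−y·a·max(0, ⟨w, x⟩) − C)), where w ∈ {α,β}^d has w_i = β exactly for i ∈ S and w_i = α otherwise, is supermodular. -/
/-!
Adding `i ∉ S` to `S` raises the pre-activation `∑ i, w_i x_i` by `(β - α) x_i ≥ 0`, independently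
of `S`, and the pre-activation is monotone in `S`. The loss is `h` of the pre-activation, where
`h u = log (1 + exp (-(y a) max 0 u - C))` is convex: softplus is convex and increasing, and
`-(y a) max 0 u` is convex because `y a ≤ 0`. A convex function has increasing differences,
`h (s + m) - h s ≤ h (t + m) - h t` for `s ≤ t` and `m ≥ 0`, which is supermodularity.
-/

/-- A set function on subsets of `Fin d` is submodular when it has diminishing returns. -/
def IsSubmodular {d : ℕ} (F : Finset (Fin d) → ℝ) : Prop :=
  ∀ B A : Finset (Fin d), B ⊆ A → ∀ i ∉ A,
    F (insert i B) - F B ≥ F (insert i A) - F A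

/-- A set function is supermodular when the reverse inequality always holds. -/
def IsSupermodular {d : ℕ} (F : Finset (Fin d) → ℝ) : Prop :=
  ∀ B A : Finset (Fin d), B ⊆ A → ∀ i ∉ A,
    F (insert i B) - F B ≤ F (insert i A) - F A

open Real Set

theorem ConvexOn.map_add_sub_map_le_map_add_sub_map {𝕜 : Type*} [Field 𝕜] [LinearOrder 𝕜]
    [IsStrictOrderedRing 𝕜] {s : Set 𝕜} {f : 𝕜 → 𝕜} (hf : ConvexOn 𝕜 s f) {x y d : 𝕜}
    (hx : x ∈ s) (hyd : y + d ∈ s) (hxy : x ≤ y) (hd : 0 ≤ d) :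
    f (x + d) - f x ≤ f (y + d) - f y := by
  rcases hd.eq_or_lt with rfl | hd
  · simp
  have hIcc : Icc x (y + d) ⊆ s := hf.1.ordConnected.out hx hyd
  have hxd : x + d ∈ s := hIcc ⟨by linarith, by linarith⟩
  have hy : y ∈ s := hIcc ⟨hxy, by linarith⟩
  -- slope over `[x, x + d]` ≤ slope over `[x, y + d]` ≤ slope over `[y, y + d]`
  have h₁ := hf.secant_mono hx hxd hyd (by linarith) (by linarith) (by linarith : x + d ≤ y + d)
  have h₂ := hf.secant_mono hyd hx hy (by linarith) (by linarith) hxy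
  rw [add_sub_cancel_left] at h₁
  have h₂' : (f (y + d) - f x) / (y + d - x) ≤ (f (y + d) - f y) / d := by
    convert h₂ using 1 <;> rw [← neg_div_neg_eq] <;> congr 1 <;> ring
  exact (div_le_div_iff_of_pos_right hd).1 (h₁.trans h₂')

theorem Finset.sum_ite_mem_mul_eq {ι R : Type*} [Fintype ι] [DecidableEq ι] [CommRing R]
    (S : Finset ι) (α β : R) (x : ι → R) :
    ∑ i, (if i ∈ S then β else α) * x i = ∑ i, α * x i + ∑ i ∈ S, (β - α) * x i := by
  have hsplit : ∀ i, (if i ∈ S then β else α) * x i = α * x i + if i ∈ S then (β - α) * x i else 0 :=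
    fun i => by split_ifs <;> ring
  simp only [hsplit, Finset.sum_add_distrib, Finset.sum_ite_mem, univ_inter]

theorem hasDerivAt_log_one_add_exp (u : ℝ) :
    HasDerivAt (fun u => log (1 + exp u)) (sigmoid u) u := by
  convert ((hasDerivAt_exp u).const_add 1).log (by positivity) using 1
  rw [sigmoid_def, exp_neg]
  field_simp
  ring

theorem convexOn_log_one_add_exp : ConvexOn ℝ univ (fun u => log (1 + exp u)) := by
  have hderiv : deriv (fun u => log (1 + exp u)) = sigmoid :=
    funext fun u => (hasDerivAt_log_one_add_exp u).deriv
  refine MonotoneOn.convexOn_of_deriv convex_univ ?_ ?_ ?_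
  · exact fun u _ => (hasDerivAt_log_one_add_exp u).continuousAt.continuousWithinAt
  · exact fun u _ => (hasDerivAt_log_one_add_exp u).differentiableAt.differentiableWithinAt
  · rw [hderiv]; exact sigmoid_monotone.monotoneOn _

theorem monotone_log_one_add_exp : Monotone (fun u => log (1 + exp u)) := fun u v huv =>
  log_le_log (by positivity) (by gcongr)

theorem ConvexOn.log_one_add_exp_comp {s : Set ℝ} {g : ℝ → ℝ} (hg : ConvexOn ℝ s g) :
    ConvexOn ℝ s (fun u => log (1 + exp (g u))) :=
  ⟨hg.1, fun _ hu _ hv _ _ ha hb hab => (monotone_log_one_add_exp (hg.2 hu hv ha hb hab)).trans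
    (convexOn_log_one_add_exp.2 trivial trivial ha hb hab)⟩

theorem isSupermodular_comp_sum_ite_mem_mul {d : ℕ} {f : ℝ → ℝ} (hf : ConvexOn ℝ univ f)
    {α β : ℝ} (hαβ : α ≤ β) {x : Fin d → ℝ} (hx : ∀ i, 0 ≤ x i) :
    IsSupermodular (fun S : Finset (Fin d) => f (∑ i, (if i ∈ S then β else α) * x i)) := by
  intro B A hBA i hiA
  have hiB : i ∉ B := fun h => hiA (hBA h)
  have hinc : 0 ≤ (β - α) * x i := mul_nonneg (sub_nonneg.2 hαβ) (hx i)
  have hmono : ∑ j ∈ B, (β - α) * x j ≤ ∑ j ∈ A, (β - α) * x j :=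
    Finset.sum_le_sum_of_subset_of_nonneg hBA fun j _ _ => mul_nonneg (sub_nonneg.2 hαβ) (hx j)
  have hshift : ∀ s, ∑ j, α * x j + ((β - α) * x i + s) = ∑ j, α * x j + s + (β - α) * x i :=
    fun s => by ring
  simp only [Finset.sum_ite_mem_mul_eq, Finset.sum_insert hiA, Finset.sum_insert hiB, hshift]
  exact hf.map_add_sub_map_le_map_add_sub_map (mem_univ _) (mem_univ _) (by linarith) hinc

theorem two_layer_loss_supermodular_nonpositive_coefficient_general
    (d : ℕ) (α β : ℝ) (hαβ : α < β)
    (x : Fin d → ℝ) (hx : ∀ i, 0 ≤ x i)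
    (y : ℝ) (a : ℝ) (hya : y * a ≤ 0) (C : ℝ) :
    IsSupermodular (fun S : Finset (Fin d) =>
      Real.log (1 + Real.exp
        (-(y * a * max 0 (∑ i, (if i ∈ S then β else α) * x i)) - C))) := by
  have hrelu : ConvexOn ℝ univ (fun u : ℝ => -(y * a) * max 0 u) :=
    ((convexOn_const 0 convex_univ).sup (convexOn_id convex_univ)).smul (neg_nonneg.2 hya)
  have hloss : ConvexOn ℝ univ (fun u => -(y * a * max 0 u) - C) := by
    refine ⟨convex_univ, fun u _ v _ p q hp hq hpq => ?_⟩
    have := hrelu.2 (mem_univ u) (mem_univ v) hp hq hpq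
    simp only [smul_eq_mul] at this ⊢
    linear_combination this + C * hpq
  exact isSupermodular_comp_sum_ite_mem_mul hloss.log_one_add_exp_comp hαβ.le hx

theorem two_layer_loss_supermodular_nonpositive_coefficient
    (d : ℕ) (hd : 0 < d) (α β : ℝ) (hαβ : α < β)
    (x : Fin d → ℝ) (hx : ∀ i, 0 ≤ x i)
    (y : ℝ) (hy : y = -1 ∨ y = 1) (a : ℝ) (hya : y * a ≤ 0) (C : ℝ) :
    IsSupermodular (fun S : Finset (Fin d) =>
      Real.log (1 + Real.exp
        (-(y * a * max 0 (∑ i, (if i ∈ S then β else α) * x i)) - C))) :=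
  two_layer_loss_supermodular_nonpositive_coefficient_general d α β hαβ x hx y a hya C
end

section
/- Let d be a positive integer, α < β real numbers, x ∈ ℝ^d with x_i ≥ 0 for every i, y ∈ {−1, +1}, a ∈ ℝ with y·a > 0, and C ∈ ℝ. Define the surrogate set function L̃ : 𝒫({1,…,d}) → ℝ by L̃(S) = log(1 + exp(−y·a·⟨w, x⟩ − C)), where w ∈ {α,β}^d has w_i = β exactly for i ∈ S and w_i = α otherwise (the loss with the ReLU removed). Then L̃ is supermodular, and L̃(S) ≥ log(1 + exp(−y·a·max(0, ⟨w, x⟩) − C)) for every S, i.e., L̃ is a supermodular upper bound of the true per-sample two-layer loss. -/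
/-!
The surrogate is `S ↦ ℓ(α ∑ᵢ xᵢ + ∑_{i ∈ S} (β - α) xᵢ)` with `ℓ` the logistic loss
`t ↦ log (1 + exp (-(y a) t - C))`, a convex function of `t`. Since the increments `(β - α) xᵢ`
are nonnegative, a convex function of a monotone modular set function is supermodular: adding
`i` to the larger set `A ⊇ B` moves the argument by the same amount from a larger starting point.
Because `y a > 0`, `ℓ` is antitone, so replacing `⟨w, x⟩` by `max 0 ⟨w, x⟩` can only lower it.
-/

open Finset Real

def HasMonotoneIncrements (g : ℝ → ℝ) : Prop :=
  ∀ t₁ t₂ δ, t₁ ≤ t₂ → 0 ≤ δ → g (t₁ + δ) - g t₁ ≤ g (t₂ + δ) - g t₂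

theorem HasMonotoneIncrements.comp_add_left {g : ℝ → ℝ} (hg : HasMonotoneIncrements g) (b : ℝ) :
    HasMonotoneIncrements fun s => g (b + s) := fun t₁ t₂ δ ht hδ => by
  simpa only [add_assoc] using hg (b + t₁) (b + t₂) δ (by linarith) hδ

theorem isSupermodular_comp_sum {d : ℕ} {g : ℝ → ℝ} (hg : HasMonotoneIncrements g)
    {v : Fin d → ℝ} (hv : ∀ i, 0 ≤ v i) : IsSupermodular fun S => g (∑ i ∈ S, v i) := by
  intro B A hBA i hiA
  have hiB : i ∉ B := fun h => hiA (hBA h)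
  simp only [sum_insert hiA, sum_insert hiB, add_comm (v i)]
  exact hg _ _ _ (sum_le_sum_of_subset_of_nonneg hBA fun j _ _ => hv j) (hv i)

theorem sum_ite_mem_mul {d : ℕ} (α β : ℝ) (x : Fin d → ℝ) (S : Finset (Fin d)) :
    ∑ i, (if i ∈ S then β else α) * x i = α * ∑ i, x i + ∑ i ∈ S, (β - α) * x i := by
  have h : ∀ i, (if i ∈ S then β else α) * x i = α * x i + if i ∈ S then (β - α) * x i else 0 := by
    intro i
    split_ifs <;> ring
  simp only [h, sum_add_distrib, mul_sum, sum_ite_mem, univ_inter]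

theorem log_one_add_mul_sub_log_one_add_anti {r u v : ℝ} (hr₀ : 0 ≤ r) (hr : r ≤ 1)
    (hv : 0 ≤ v) (hvu : v ≤ u) :
    log (1 + r * u) - log (1 + u) ≤ log (1 + r * v) - log (1 + v) := by
  have hu : 0 ≤ u := hv.trans hvu
  have hru : 0 < 1 + r * u := by positivity
  have hrv : 0 < 1 + r * v := by positivity
  rw [sub_le_sub_iff, ← log_mul hru.ne' (by positivity), ← log_mul hrv.ne' (by positivity)]
  exact log_le_log (by positivity) (by nlinarith [mul_le_mul_of_nonneg_left hvu hr₀])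

noncomputable def logisticLoss (c C t : ℝ) : ℝ :=
  log (1 + exp (-(c * t) - C))

theorem logisticLoss_add (c C t δ : ℝ) :
    logisticLoss c C (t + δ) = log (1 + exp (-(c * δ)) * exp (-(c * t) - C)) := by
  rw [logisticLoss, ← exp_add]
  ring_nf

theorem logisticLoss_antitone {c : ℝ} (hc : 0 ≤ c) (C : ℝ) : Antitone (logisticLoss c C) :=
  fun _ _ hst => log_le_log (by positivity) (by gcongr)

theorem hasMonotoneIncrements_logisticLoss {c : ℝ} (hc : 0 ≤ c) (C : ℝ) :
    HasMonotoneIncrements (logisticLoss c C) := by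
  intro t₁ t₂ δ ht hδ
  rw [logisticLoss_add, logisticLoss_add]
  exact log_one_add_mul_sub_log_one_add_anti (exp_pos _).le
    (exp_le_one_iff.2 (by nlinarith)) (exp_pos _).le (exp_le_exp.2 (by nlinarith))

theorem two_layer_loss_surrogate_supermodular_upper_bound_general
    (d : ℕ) (α β : ℝ) (hαβ : α < β)
    (x : Fin d → ℝ) (hx : ∀ i, 0 ≤ x i)
    (y : ℝ) (a : ℝ) (hya : 0 < y * a) (C : ℝ) :
    IsSupermodular (fun S : Finset (Fin d) =>
      Real.log (1 + Real.exp
        (-(y * a * ∑ i, (if i ∈ S then β else α) * x i) - C))) ∧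
    (∀ S : Finset (Fin d),
      Real.log (1 + Real.exp
        (-(y * a * ∑ i, (if i ∈ S then β else α) * x i) - C))
      ≥ Real.log (1 + Real.exp
        (-(y * a * max 0 (∑ i, (if i ∈ S then β else α) * x i)) - C))) := by
  refine ⟨?_, fun S => logisticLoss_antitone hya.le C (le_max_right _ _)⟩
  simp only [sum_ite_mem_mul α β x]
  exact isSupermodular_comp_sum
    ((hasMonotoneIncrements_logisticLoss hya.le C).comp_add_left (α * ∑ i, x i))
    fun i => mul_nonneg (sub_nonneg.2 hαβ.le) (hx i)

theorem two_layer_loss_surrogate_supermodular_upper_bound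
    (d : ℕ) (hd : 0 < d) (α β : ℝ) (hαβ : α < β)
    (x : Fin d → ℝ) (hx : ∀ i, 0 ≤ x i)
    (y : ℝ) (hy : y = -1 ∨ y = 1) (a : ℝ) (hya : 0 < y * a) (C : ℝ) :
    IsSupermodular (fun S : Finset (Fin d) =>
      Real.log (1 + Real.exp
        (-(y * a * ∑ i, (if i ∈ S then β else α) * x i) - C))) ∧
    (∀ S : Finset (Fin d),
      Real.log (1 + Real.exp
        (-(y * a * ∑ i, (if i ∈ S then β else α) * x i) - C))
      ≥ Real.log (1 + Real.exp
        (-(y * a * max 0 (∑ i, (if i ∈ S then β else α) * x i)) - C))) :=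
  two_layer_loss_surrogate_supermodular_upper_bound_general d α β hαβ x hx y a hya C
end
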